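/- Leader election safety invariant is inductive with respect to interference: let n ≥ 3 and suppose id : ZMod n → ℕ is injective with all values positive, and comp : ZMod n → ℕ. Suppose the invariant holds in state (id, comp): for all x,y,z with btw(x,y,z), (id(y)=comp(x) → id(z) ≤ id(y)) and (id(x)=comp(x) → id(y) ≤ id(x) ∧ id(z) ≤ id(x)) and (id(x)=comp(x) ∧ id(y)=comp(y) → x=y). If comp' agrees with comp except comp'(p+1) = max(id(p), comp(p)) for some p, and id is unchanged, then the invariant holds in state (id, comp'). -/

import Mathlib

def btwZ (n : ℕ) (x y z : ZMod n) : Prop :=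
  (x.val < y.val ∧ y.val < z.val) ∨ (y.val < z.val ∧ z.val < x.val) ∨
    (z.val < x.val ∧ x.val < y.val)

def LeaderInv (n : ℕ) (id comp : ZMod n → ℕ) : Prop :=
  ∀ x y z : ZMod n, btwZ n x y z →
    (id y = comp x → id z ≤ id y) ∧
    (id x = comp x → id y ≤ id x ∧ id z ≤ id x) ∧
    (id x = comp x → id y = comp y → x = y)

/-!
Only node `s = p + 1` changes, to `comp' s = max (id p) (comp p)`. As `id` is injective, a node
`y ≠ p` with `id y = comp' s` has `id y = comp p` and `id p ≤ id y`, so the first clause of the old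
invariant at `p` bounds by `id y` every node on the arc from `y` to `p`; since no node lies strictly
between `p` and `s`, these arcs cover all triples the new clauses at `s` ask about. For uniqueness:
if `id s = comp p` and some `x ≠ s` had `id x = comp x`, the old invariant at `p` gives
`id x ≤ id s` and the one at `x` gives `id s ≤ id x`, contradicting injectivity.
-/

lemma ZMod.val_add_one_eq_or {n : ℕ} [NeZero n] (p : ZMod n) :
    (p + 1).val = p.val + 1 ∨ ((p + 1).val = 0 ∧ p.val + 1 = n) := by
  have hval : (p + 1).val = (p.val + 1) % n := by
    rw [ZMod.val_add, ZMod.val_one_eq_one_mod, Nat.add_mod_mod]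
  rcases (show p.val + 1 ≤ n from p.val_lt).lt_or_eq with h | h
  · exact .inl (hval.trans (Nat.mod_eq_of_lt h))
  · exact .inr ⟨by rw [hval, h, Nat.mod_self], h⟩

section btwZ

variable {n : ℕ}

lemma btwZ.rotate {x y z : ZMod n} (h : btwZ n x y z) : btwZ n z x y := by
  unfold btwZ at h ⊢
  tauto

lemma btwZ.ne {x y z : ZMod n} (h : btwZ n x y z) : x ≠ y ∧ y ≠ z ∧ x ≠ z := by
  unfold btwZ at h
  refine ⟨?_, ?_, ?_⟩ <;> rintro rfl <;> omega

variable [NeZero n]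

lemma not_btwZ_add_one_self (p z : ZMod n) : ¬ btwZ n (p + 1) p z := by
  have := z.val_lt
  unfold btwZ
  rcases p.val_add_one_eq_or with h | h <;> omega

lemma eq_or_btwZ_add_one {p w : ZMod n} (hw : w ≠ p + 1) : w = p ∨ btwZ n p (p + 1) w := by
  by_cases hwp : w = p
  · exact .inl hwp
  have h₁ := (ZMod.val_injective n).ne hw
  have h₂ := (ZMod.val_injective n).ne hwp
  have := w.val_lt
  unfold btwZ
  rcases p.val_add_one_eq_or with h | h <;> omega

lemma btwZ.eq_or_btwZ_of_add_one {p y z : ZMod n} (h : btwZ n (p + 1) y z) :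
    z = p ∨ btwZ n p y z := by
  by_cases hzp : z = p
  · exact .inl hzp
  have hyp : y ≠ p := fun hyp => not_btwZ_add_one_self p z (hyp ▸ h)
  have h₁ := (ZMod.val_injective n).ne hyp
  have h₂ := (ZMod.val_injective n).ne hzp
  have := y.val_lt
  have := z.val_lt
  unfold btwZ at h ⊢
  rcases p.val_add_one_eq_or with h | h <;> omega

end btwZ

section

variable {n : ℕ} {id comp : ZMod n → ℕ}

lemma id_eq_comp_of_eq_max (hinj : Function.Injective id) {p y : ZMod n} (hy : y ≠ p)
    (h : id y = max (id p) (comp p)) : id y = comp p := by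
  rcases max_choice (id p) (comp p) with hm | hm
  · exact absurd (hinj (h.trans hm)) hy
  · exact h.trans hm

namespace LeaderInv

lemma id_le_of_eq_max (hinv : LeaderInv n id comp) (hinj : Function.Injective id)
    {p y w : ZMod n} (hy : y ≠ p) (h : id y = max (id p) (comp p))
    (hw : w = p ∨ btwZ n p y w) : id w ≤ id y := by
  rcases hw with hwp | hw
  · exact hwp ▸ h ▸ le_max_left _ _
  · exact (hinv p y w hw).1 (id_eq_comp_of_eq_max hinj hy h)

variable [NeZero n]

lemma eq_add_one_of_id_eq_comp (hinv : LeaderInv n id comp) (hinj : Function.Injective id)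
    {p x : ZMod n} (hp : p + 1 ≠ p) (h : id (p + 1) = max (id p) (comp p))
    (hx : id x = comp x) : x = p + 1 := by
  have hs : id (p + 1) = comp p := id_eq_comp_of_eq_max hinj hp h
  by_contra hxs
  rcases eq_or_btwZ_add_one hxs with rfl | hb
  · exact hp (hinj (hs.trans hx.symm))
  · have hle : id x ≤ id (p + 1) := (hinv p (p + 1) x hb).1 hs
    have hge : id (p + 1) ≤ id x := ((hinv x p (p + 1) hb.rotate).2.1 hx).2
    exact hxs (hinj (le_antisymm hle hge))

end LeaderInv

end

theorem leader_inv_inductive_general (n : ℕ) (hn : 3 ≤ n)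
    (id comp comp' : ZMod n → ℕ)
    (hinj : Function.Injective id)
    (hinv : LeaderInv n id comp)
    (p : ZMod n)
    (hupd : comp' (p + 1) = max (id p) (comp p))
    (hframe : ∀ q, q ≠ p + 1 → comp' q = comp q) :
    LeaderInv n id comp' := by
  have : NeZero n := ⟨by omega⟩
  have : Nontrivial (ZMod n) := ZMod.nontrivial_iff.2 (by omega)
  have hp : p + 1 ≠ p := by simp
  intro x y z hxyz
  obtain ⟨hxy, -, hxz⟩ := hxyz.ne
  refine ⟨fun hy => ?_, fun hx => ?_, fun hx hy => ?_⟩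
  · by_cases hxs : x = p + 1
    · subst hxs
      have hyp : y ≠ p := fun hyp => not_btwZ_add_one_self p z (hyp ▸ hxyz)
      exact hinv.id_le_of_eq_max hinj hyp (hupd ▸ hy) hxyz.eq_or_btwZ_of_add_one
    · exact (hinv x y z hxyz).1 (hframe x hxs ▸ hy)
  · by_cases hxs : x = p + 1
    · subst hxs
      exact ⟨hinv.id_le_of_eq_max hinj hp (hupd ▸ hx) (eq_or_btwZ_add_one hxy.symm),
        hinv.id_le_of_eq_max hinj hp (hupd ▸ hx) (eq_or_btwZ_add_one hxz.symm)⟩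
    · exact (hinv x y z hxyz).2.1 (hframe x hxs ▸ hx)
  · by_cases hxs : x = p + 1
    · subst hxs
      exact (hinv.eq_add_one_of_id_eq_comp hinj hp (hupd ▸ hx) (hframe y hxy.symm ▸ hy)).symm
    by_cases hys : y = p + 1
    · subst hys
      exact hinv.eq_add_one_of_id_eq_comp hinj hp (hupd ▸ hy) (hframe x hxs ▸ hx)
    · exact (hinv x y z hxyz).2.2 (hframe x hxs ▸ hx) (hframe y hys ▸ hy)

theorem leader_inv_inductive (n : ℕ) (hn : 3 ≤ n)
    (id comp comp' : ZMod n → ℕ)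
    (hinj : Function.Injective id) (hpos : ∀ x, 0 < id x)
    (hinv : LeaderInv n id comp)
    (p : ZMod n)
    (hupd : comp' (p + 1) = max (id p) (comp p))
    (hframe : ∀ q, q ≠ p + 1 → comp' q = comp q) :
    LeaderInv n id comp' :=
  leader_inv_inductive_general n hn id comp comp' hinj hinv p hupd hframe
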